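/- Let R be a universal R-matrix for H with Drinfeld u-operator u. Then u is invertible and the square of the antipode is conjugation by u: S²(a) = u·a·u⁻¹ for every a ∈ H. -/

import Mathlib

/-!
Write `R = Σ aᵢ ⊗ bᵢ`, so that `u = Σ S(bᵢ) aᵢ`. Apply the map `φ ↦ (x ↦ Σ S²(x₂) · u(φ(x₁)))`
to both sides of `R · Δ(x) = Δᵀ(x) · R`, viewed as linear maps in `x`. On the left,
coassociativity and `S(y₁ S(y₂)) = ε(y)` collapse the sum to `u · x`; on the right,
`S(y₁) y₂ = ε(y)` collapses it to `S²(x) · u`. Hence `u · x = S²(x) · u`.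

With `R⁻¹ = Σ cⱼ ⊗ dⱼ`, this identity gives `1 = u(R R⁻¹) = v · u` for `v = Σ S(dⱼ) S²(cⱼ)`,
and `u · S⁻²(v) = v · u = 1`, so `u` is invertible with inverse `v`.
-/

open TensorProduct

noncomputable section

variable (k H : Type*) [CommRing k] [Ring H] [HopfAlgebra k H]

/-- The k-linear swap `τ : H ⊗ H → H ⊗ H`, `x ⊗ y ↦ y ⊗ x`. -/
def tau : H ⊗[k] H →ₗ[k] H ⊗[k] H := (TensorProduct.comm k H H).toLinearMap

/-- The opposite comultiplication `Δᵀ := τ ∘ Δ`. -/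
def DeltaT : H →ₗ[k] H ⊗[k] H := tau k H ∘ₗ Coalgebra.comul

/-- Embedding of `H ⊗ H` into slots (1,2) of `H ⊗ (H ⊗ H)`: `x ⊗ y ↦ x ⊗ y ⊗ 1`. -/
def emb12 : H ⊗[k] H →ₐ[k] H ⊗[k] (H ⊗[k] H) :=
  Algebra.TensorProduct.map (AlgHom.id k H) Algebra.TensorProduct.includeLeft

/-- Embedding of `H ⊗ H` into slots (1,3) of `H ⊗ (H ⊗ H)`: `x ⊗ y ↦ x ⊗ 1 ⊗ y`. -/
def emb13 : H ⊗[k] H →ₐ[k] H ⊗[k] (H ⊗[k] H) :=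
  Algebra.TensorProduct.map (AlgHom.id k H) Algebra.TensorProduct.includeRight

/-- Embedding of `H ⊗ H` into slots (2,3) of `H ⊗ (H ⊗ H)`: `x ⊗ y ↦ 1 ⊗ x ⊗ y`. -/
def emb23 : H ⊗[k] H →ₐ[k] H ⊗[k] (H ⊗[k] H) :=
  Algebra.TensorProduct.includeRight

/-- The map `Δ ⊗ id : H ⊗ H → H ⊗ (H ⊗ H)`. -/
def DeltaId : H ⊗[k] H →ₗ[k] H ⊗[k] (H ⊗[k] H) :=
  (TensorProduct.assoc k H H H).toLinearMap ∘ₗ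
    TensorProduct.map Coalgebra.comul LinearMap.id

/-- The map `id ⊗ Δ : H ⊗ H → H ⊗ (H ⊗ H)`. -/
def IdDelta : H ⊗[k] H →ₗ[k] H ⊗[k] (H ⊗[k] H) :=
  TensorProduct.map LinearMap.id Coalgebra.comul

/-- `R` is a universal R-matrix: it is invertible, satisfies the two hexagon
relations `(Δ⊗id)R = R₁₃R₂₃`, `(id⊗Δ)R = R₁₃R₁₂`, and intertwines `Δ` with `Δᵀ`. -/
structure IsUniversalRMatrix (R : H ⊗[k] H) : Prop where
  isUnit : IsUnit R
  hexagon1 : DeltaId k H R = emb13 k H R * emb23 k H R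
  hexagon2 : IdDelta k H R = emb13 k H R * emb12 k H R
  intertwine : ∀ a : H, R * Coalgebra.comul a = DeltaT k H a * R

/-- The Drinfeld u-operator `u = m ((S ⊗ id) (τ R))`. -/
def uOp (R : H ⊗[k] H) : H :=
  LinearMap.mul' k H
    (TensorProduct.map (HopfAlgebra.antipode (R := k)) LinearMap.id (tau k H R))

section
open LinearMap Coalgebra HopfAlgebra
variable {k H : Type*} [CommSemiring k] [Semiring H] [HopfAlgebra k H]

def drinfeldMap : H ⊗[k] H →ₗ[k] H :=
  mul' k H ∘ₗ map (antipode k) id ∘ₗ (TensorProduct.comm k H H).toLinearMap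

@[simp] lemma drinfeldMap_tmul (a b : H) : drinfeldMap (a ⊗ₜ[k] b) = antipode k b * a := by
  simp [drinfeldMap]

lemma drinfeldMap_one : drinfeldMap (1 : H ⊗[k] H) = 1 := by
  simp [Algebra.TensorProduct.one_def]

lemma drinfeldMap_mul_tmul (X : H ⊗[k] H) (c d : H) :
    drinfeldMap (X * c ⊗ₜ d) = antipode k d * drinfeldMap X * c := by
  induction X using TensorProduct.induction_on with
  | zero => simp
  | tmul a b => simp [antipode_mul_antidistrib, mul_assoc]
  | add X Y hX hY => simp [add_mul, mul_add, hX, hY]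

lemma drinfeldMap_comm_comul (y : H) :
    drinfeldMap (TensorProduct.comm k H H (comul (R := k) y))
      = algebraMap k H (counit (R := k) y) := by
  simp [drinfeldMap, ← rTensor_def]

lemma drinfeldMap_comm_comul_mul (y : H) (T : H ⊗[k] H) :
    drinfeldMap (TensorProduct.comm k H H (comul (R := k) y) * T)
      = counit (R := k) y • drinfeldMap T := by
  induction T using TensorProduct.induction_on with
  | zero => simp
  | tmul a b =>
    rw [drinfeldMap_mul_tmul, drinfeldMap_comm_comul, drinfeldMap_tmul, ← Algebra.commutes,
      Algebra.smul_def, mul_assoc]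
  | add X Y hX hY => simp [mul_add, hX, hY]

lemma antipode_algebraMap (r : k) : antipode k (algebraMap k H r) = algebraMap k H r := by
  rw [Algebra.algebraMap_eq_smul_one, map_smul, antipode_one]

lemma antipode_comp_mul_comp_lTensor_antipode_comp_comul :
    antipode k ∘ₗ mul' k H ∘ₗ (antipode k).lTensor H ∘ₗ comul
      = Algebra.linearMap k H ∘ₗ counit := by
  ext x
  simp [antipode_algebraMap]

/-- In Sweedler notation, `drinfeldTwist φ x = Σ S²(x₂) · drinfeldMap (φ x₁)`. -/
def drinfeldTwist (φ : H →ₗ[k] H ⊗[k] H) : H →ₗ[k] H :=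
  mul' k H ∘ₗ (TensorProduct.comm k H H).toLinearMap ∘ₗ
    map (drinfeldMap ∘ₗ φ) (antipode k ∘ₗ antipode k) ∘ₗ comul

lemma drinfeldTwist_mulLeft_comp_comul (T : H ⊗[k] H) :
    drinfeldTwist (mulLeft k T ∘ₗ comul) = mulLeft k (drinfeldMap T) := by
  set S' : H ⊗[k] H →ₗ[k] H := antipode k ∘ₗ mul' k H ∘ₗ (antipode k).lTensor H
  -- `S²(r) S(q) = S(q S(r))`, a function of the last two legs only
  have hassoc : mul' k H ∘ₗ (TensorProduct.comm k H H).toLinearMap ∘ₗ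
        map (drinfeldMap ∘ₗ mulLeft k T) (antipode k ∘ₗ antipode k) ∘ₗ
        (TensorProduct.assoc k H H H).symm.toLinearMap
      = mul' k H ∘ₗ (TensorProduct.comm k H H).toLinearMap ∘ₗ
        map (mulLeft k (drinfeldMap T)) S' := by
    ext p q r
    simp [S', drinfeldMap_mul_tmul, antipode_mul_antidistrib, mul_assoc]
  ext x
  calc drinfeldTwist (mulLeft k T ∘ₗ comul) x
      = (mul' k H ∘ₗ (TensorProduct.comm k H H).toLinearMap ∘ₗ
          map (drinfeldMap ∘ₗ mulLeft k T) (antipode k ∘ₗ antipode k))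
          (comul.rTensor H (comul x)) := by
        simp [drinfeldTwist, comp_assoc]
    _ = (mul' k H ∘ₗ (TensorProduct.comm k H H).toLinearMap ∘ₗ
          map (mulLeft k (drinfeldMap T)) S') (comul.lTensor H (comul x)) := by
        rw [← hassoc, ← coassoc_symm_apply]; rfl
    _ = drinfeldMap T * x := by
        simp only [S', comp_apply, map_lTensor, comp_assoc,
          antipode_comp_mul_comp_lTensor_antipode_comp_comul]
        rw [← map_lTensor, lTensor_counit_comul]
        simp

lemma drinfeldTwist_mulRight_comp_comm_comp_comul (T : H ⊗[k] H) :
    drinfeldTwist (mulRight k T ∘ₗ (TensorProduct.comm k H H).toLinearMap ∘ₗ comul)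
      = mulRight k (drinfeldMap T) ∘ₗ antipode k ∘ₗ antipode k := by
  have hcounit :
      drinfeldMap ∘ₗ mulRight k T ∘ₗ (TensorProduct.comm k H H).toLinearMap ∘ₗ comul
        = toSpanSingleton k H (drinfeldMap T) ∘ₗ counit := by
    ext y
    simp [drinfeldMap_comm_comul_mul]
  ext x
  simp only [drinfeldTwist, comp_apply, hcounit]
  rw [← map_rTensor, rTensor_counit_comul]
  simp

lemma drinfeldMap_mul_eq_antipode_antipode_mul {R : H ⊗[k] H}
    (hR : ∀ a : H, R * comul a = TensorProduct.comm k H H (comul a) * R) (x : H) :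
    drinfeldMap R * x = antipode k (antipode k x) * drinfeldMap R := by
  have hφ : mulLeft k R ∘ₗ comul
      = mulRight k R ∘ₗ (TensorProduct.comm k H H).toLinearMap ∘ₗ comul := ext hR
  calc drinfeldMap R * x = drinfeldTwist (mulLeft k R ∘ₗ comul) x := by
        rw [drinfeldTwist_mulLeft_comp_comul, mulLeft_apply]
    _ = antipode k (antipode k x) * drinfeldMap R := by
        rw [hφ, drinfeldTwist_mulRight_comp_comm_comp_comul]; rfl

lemma drinfeldMap_mul_of_conj {R : H ⊗[k] H}
    (hR : ∀ x : H, drinfeldMap R * x = antipode k (antipode k x) * drinfeldMap R)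
    (Y : H ⊗[k] H) :
    drinfeldMap (R * Y)
      = drinfeldMap (map (antipode k ∘ₗ antipode k) id Y) * drinfeldMap R := by
  induction Y using TensorProduct.induction_on with
  | zero => simp
  | tmul c d => simp [drinfeldMap_mul_tmul, hR, mul_assoc]
  | add Y Z hY hZ => simp [mul_add, add_mul, hY, hZ]

end

theorem antipode_sq_eq_conj_uOp (R : H ⊗[k] H) (hR : IsUniversalRMatrix k H R)
    (Sinv : H →ₗ[k] H)
    (hS2 : ∀ a : H, HopfAlgebra.antipode (R := k) (Sinv a) = a) :
    ∃ v : H, uOp k H R * v = 1 ∧ v * uOp k H R = 1 ∧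
      ∀ a : H,
        HopfAlgebra.antipode (R := k) (HopfAlgebra.antipode (R := k) a) =
          uOp k H R * a * v := by
  have huOp : uOp k H R = drinfeldMap R := rfl
  have hconj : ∀ x : H, drinfeldMap R * x
      = HopfAlgebra.antipode k (HopfAlgebra.antipode k x) * drinfeldMap R :=
    drinfeldMap_mul_eq_antipode_antipode_mul hR.intertwine
  obtain ⟨R', hRR'⟩ := hR.isUnit.exists_right_inv
  set v := drinfeldMap (map (HopfAlgebra.antipode k ∘ₗ HopfAlgebra.antipode k) LinearMap.id R')
  have hvu : v * drinfeldMap R = 1 := by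
    rw [← drinfeldMap_mul_of_conj hconj, hRR', drinfeldMap_one]
  have huw : drinfeldMap R * Sinv (Sinv v) = 1 := by
    rw [hconj, hS2, hS2, hvu]
  have huv : drinfeldMap R * v = 1 := left_inv_eq_right_inv hvu huw ▸ huw
  refine ⟨v, huOp ▸ huv, huOp ▸ hvu, fun a => ?_⟩
  rw [huOp, hconj, mul_assoc, huv, mul_one]
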